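/- (First soundness theorem) If Γ ⊢ r : φ is derivable in the simply typed λ-calculus, then the interpretation ⟦r⟧_Γ in any nominal model I is an element of ⟦φ⟧_Γ; moreover supp(⟦r⟧_Γ) ⊆ fa(r). -/

import Mathlib

/-! Background: atoms, permutations, simple types, λ-terms. -/

/-- Atoms (variables): a countably infinite set. -/
abbrev Atom := ℕ

/-- The set of atoms moved by a permutation. -/
def Nontriv (π : Equiv.Perm Atom) : Set Atom := {a | π a ≠ a}

/-- Simple types over a countably infinite set of base types. -/
inductive Ty : Type
  | base : ℕ → Ty
  | arr : Ty → Ty → Ty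
deriving DecidableEq

/-- Terms of the simply typed λ-calculus: atoms, constants (a constant carries a
name and its type), λ-abstraction and application. -/
inductive Term : Type
  | atom : Atom → Term
  | const : ℕ → Ty → Term
  | lam : Atom → Ty → Term → Term
  | app : Term → Term → Term
deriving DecidableEq

/-- Permutation action on terms. -/
def Term.perm (π : Equiv.Perm Atom) : Term → Term
  | .atom a => .atom (π a)
  | .const c φ => .const c φ
  | .lam a φ r => .lam (π a) φ (r.perm π)
  | .app r s => .app (r.perm π) (s.perm π)

/-- Free atoms of a term. -/
def Term.fa : Term → Finset Atom
  | .atom a => {a}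
  | .const _ _ => ∅
  | .lam a _ r => r.fa.erase a
  | .app r s => r.fa ∪ s.fa

/-- Capture-avoiding substitution `r[a := t]`, as a relation `Subst a t r r'`
(defined relationally on raw terms; the freshness side conditions on binders
can always be guaranteed by α-renaming). -/
inductive Subst (a : Atom) (t : Term) : Term → Term → Prop
  | atom_eq : Subst a t (.atom a) t
  | atom_ne {b : Atom} : b ≠ a → Subst a t (.atom b) (.atom b)
  | const {c : ℕ} {φ : Ty} : Subst a t (.const c φ) (.const c φ)
  | app {r r' s s' : Term} : Subst a t r r' → Subst a t s s' → Subst a t (.app r s) (.app r' s')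
  | lam {c : Atom} {φ : Ty} {r r' : Term} :
      c ≠ a → c ∉ t.fa → Subst a t r r' → Subst a t (.lam c φ r) (.lam c φ r')

/-- Type environments: finite functional sets of atomic typings `a : φ`. -/
abbrev Env := Finset (Atom × Ty)

/-- Functionality of an environment. -/
def Functional (Γ : Env) : Prop := ∀ ⦃a : Atom⦄ ⦃φ ψ : Ty⦄, (a, φ) ∈ Γ → (a, ψ) ∈ Γ → φ = ψ

/-- Domain of an environment. -/
def domE (Γ : Env) : Finset Atom := Γ.image Prod.fst

/-- Permutation action on environments. -/
def permE (π : Equiv.Perm Atom) (Γ : Env) : Env := Γ.image fun p => (π p.1, p.2)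

/-- Typing rules (V), (C), (L), (A) of the simply typed λ-calculus. -/
inductive Typing : Env → Term → Ty → Prop
  | V {Γ : Env} {a : Atom} {φ : Ty} : Functional Γ → (a, φ) ∈ Γ → Typing Γ (.atom a) φ
  | C {Γ : Env} {c : ℕ} {φ : Ty} : Functional Γ → Typing Γ (.const c φ) φ
  | L {Γ : Env} {a : Atom} {φ ψ : Ty} {r : Term} :
      a ∉ domE Γ → Typing (insert (a, φ) Γ) r ψ → Typing Γ (.lam a φ r) (.arr φ ψ)
  | A {Γ : Env} {φ ψ : Ty} {r s : Term} :
      Typing Γ r (.arr φ ψ) → Typing Γ s φ → Typing Γ (.app r s) ψ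

/-- β-equivalence: the least equivalence (on terms up to α-equivalence)
closed under (CongApp), (ξ), and (β). -/
inductive Beta : Term → Term → Prop
  | refl (r : Term) : Beta r r
  | symm {r s : Term} : Beta r s → Beta s r
  | trans {r s t : Term} : Beta r s → Beta s t → Beta r t
  | congApp {r r' s s' : Term} : Beta r r' → Beta s s' → Beta (.app r s) (.app r' s')
  | xi {a : Atom} {φ : Ty} {s s' : Term} : Beta s s' → Beta (.lam a φ s) (.lam a φ s')
  | beta {a : Atom} {φ : Ty} {r t r' : Term} :
      Subst a t r r' → Beta (.app (.lam a φ r) t) r'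
  | alpha {a b : Atom} {φ : Ty} {r : Term} :
      b ∉ r.fa → Beta (.lam a φ r) (.lam b φ (r.perm (Equiv.swap b a)))

section Model

/-- `A` supports `x` with respect to the action `act`. -/
def SupportsAct {D : Type*} (act : Equiv.Perm Atom → D → D) (A : Set Atom) (x : D) : Prop :=
  ∀ π : Equiv.Perm Atom, (Nontriv π).Finite → (∀ a ∈ A, π a = a) → act π x = x

/-- `a # x`: `a` is fresh for `x` (some finite set avoiding `a` supports `x`). -/
def FreshAct {D : Type*} (act : Equiv.Perm Atom → D → D) (a : Atom) (x : D) : Prop :=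
  ∃ A : Finset Atom, a ∉ A ∧ SupportsAct act (↑A) x

/-- A nominal (Henkin-style) model of the simply typed λ-calculus: an equivariant
assignment of finitely-supported sets `den Γ φ` together with interpretations of atoms,
constants, abstraction and application, satisfying the nominal algebra axioms for
substitution (Suba), (Sub#), (SubApp), (Subλ). -/
structure Model where
  D : Type
  act : Equiv.Perm Atom → D → D
  act_one : ∀ x, act 1 x = x
  act_mul : ∀ π π' x, act (π * π') x = act π (act π' x)
  den : Env → Ty → Set D
  atomI : Atom → Ty → D
  constI : ℕ → Ty → D
  abs : Atom → Ty → D → D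
  app : D → D → D
  /-- each `den Γ φ` is a finitely-supported set -/
  den_fs : ∀ Γ φ, ∃ A : Finset Atom,
    ∀ π : Equiv.Perm Atom, (Nontriv π).Finite → (∀ a ∈ (A : Set Atom), π a = a) →
      act π '' den Γ φ = den Γ φ
  atomI_mem : ∀ {Γ a φ}, Functional Γ → (a, φ) ∈ Γ → atomI a φ ∈ den Γ φ
  constI_mem : ∀ {Γ}, Functional Γ → ∀ c φ, constI c φ ∈ den Γ φ
  abs_mem : ∀ {Γ a φ ψ x}, Functional Γ → a ∉ domE Γ →
    x ∈ den (insert (a, φ) Γ) ψ → abs a φ x ∈ den Γ (.arr φ ψ)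
  app_mem : ∀ {Γ φ ψ x y}, Functional Γ →
    x ∈ den Γ (.arr φ ψ) → y ∈ den Γ φ → app x y ∈ den Γ ψ
  den_inter : ∀ {Γ Γ'}, Functional Γ → Functional Γ' →
    ∀ φ, den (Γ ∩ Γ') φ = den Γ φ ∩ den Γ' φ
  den_supp : ∀ {Γ φ x}, Functional Γ → x ∈ den Γ φ → SupportsAct act (↑(domE Γ)) x
  equiv_den : ∀ π : Equiv.Perm Atom, (Nontriv π).Finite →
    ∀ Γ φ, act π '' den Γ φ = den (permE π Γ) φ
  equiv_atomI : ∀ π : Equiv.Perm Atom, (Nontriv π).Finite →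
    ∀ a φ, act π (atomI a φ) = atomI (π a) φ
  equiv_constI : ∀ π : Equiv.Perm Atom, (Nontriv π).Finite →
    ∀ c φ, act π (constI c φ) = constI c φ
  equiv_abs : ∀ π : Equiv.Perm Atom, (Nontriv π).Finite →
    ∀ a φ x, act π (abs a φ x) = abs (π a) φ (act π x)
  equiv_app : ∀ π : Equiv.Perm Atom, (Nontriv π).Finite →
    ∀ x y, act π (app x y) = app (act π x) (act π y)
  /-- (Suba): `a[a ↦ x] = x` -/
  sub_a : ∀ a φ x, app (abs a φ (atomI a φ)) x = x
  /-- (Sub#): `a # z` implies `z[a ↦ x] = z` -/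
  sub_fresh : ∀ a φ z x, FreshAct act a z → app (abs a φ z) x = z
  /-- (SubApp): `(z' z)[a ↦ x] = (z'[a ↦ x]) (z[a ↦ x])` -/
  sub_app : ∀ a φ z' z x,
    app (abs a φ (app z' z)) x = app (app (abs a φ z') x) (app (abs a φ z) x)
  /-- (Subλ): `c # x` implies `([c]z)[a ↦ x] = [c](z[a ↦ x])` -/
  sub_lam : ∀ a φ c χ z x, c ≠ a → FreshAct act c x →
    app (abs a φ (abs c χ z)) x = abs c χ (app (abs a φ z) x)

/-- The interpretation `⟦r⟧_Γ` of a term in a model, as a relation: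
`Interp M Γ r φ x` means `⟦r⟧_Γ = x` (at type `φ`). -/
inductive Interp (M : Model) : Env → Term → Ty → M.D → Prop
  | atom {Γ a φ} : (a, φ) ∈ Γ → Interp M Γ (.atom a) φ (M.atomI a φ)
  | const {Γ c φ} : Interp M Γ (.const c φ) φ (M.constI c φ)
  | app {Γ φ ψ r s x y} : Interp M Γ r (.arr φ ψ) x → Interp M Γ s φ y →
      Interp M Γ (.app r s) ψ (M.app x y)
  | lam {Γ a φ ψ r x} : a ∉ domE Γ → Interp M (insert (a, φ) Γ) r ψ x →
      Interp M Γ (.lam a φ r) (.arr φ ψ) (M.abs a φ x)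

end Model

lemma mem_domE {Γ : Env} {a : Atom} : a ∈ domE Γ ↔ ∃ φ, (a, φ) ∈ Γ := by
  simp [domE]

lemma domE_filter_subset (Γ : Env) (s : Finset Atom) :
    domE (Γ.filter fun p => p.1 ∈ s) ⊆ s := by
  intro a ha
  obtain ⟨φ, hmem⟩ := mem_domE.1 ha
  exact (Finset.mem_filter.1 hmem).2

lemma SupportsAct.mono {D : Type*} {act : Equiv.Perm Atom → D → D} {A B : Set Atom} {x : D}
    (hx : SupportsAct act A x) (hAB : A ⊆ B) : SupportsAct act B x :=
  fun π hπ hfix => hx π hπ fun a ha => hfix a (hAB ha)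

lemma Functional.subset {Γ Δ : Env} (hF : Functional Γ) (h : Δ ⊆ Γ) : Functional Δ :=
  fun _ _ _ h₁ h₂ => hF (h h₁) (h h₂)

lemma Functional.insert {Γ : Env} {a : Atom} {φ : Ty} (hF : Functional Γ)
    (ha : a ∉ domE Γ) : Functional (insert (a, φ) Γ) := by
  have hfresh : ∀ ψ, (a, ψ) ∉ Γ := fun ψ h => ha (mem_domE.2 ⟨ψ, h⟩)
  intro b ψ χ h₁ h₂
  simp only [Finset.mem_insert, Prod.mk.injEq] at h₁ h₂
  rcases h₁ with ⟨rfl, rfl⟩ | h₁ <;> rcases h₂ with ⟨hb, rfl⟩ | h₂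
  · rfl
  · exact absurd h₂ (hfresh χ)
  · exact absurd (hb ▸ h₁) (hfresh ψ)
  · exact hF h₁ h₂

lemma Typing.functional {Γ : Env} {r : Term} {φ : Ty} (h : Typing Γ r φ) : Functional Γ := by
  induction h with
  | V hF _ => exact hF
  | C hF => exact hF
  | L _ _ ih => exact ih.subset (Finset.subset_insert _ _)
  | A _ _ ih _ => exact ih

lemma Typing.exists_interp (M : Model) {Γ : Env} {r : Term} {φ : Ty} (h : Typing Γ r φ) :
    ∃ x, Interp M Γ r φ x := by
  induction h with
  | V _ ha => exact ⟨_, .atom ha⟩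
  | C _ => exact ⟨_, .const⟩
  | L ha _ ih =>
    obtain ⟨x, hx⟩ := ih
    exact ⟨_, .lam ha hx⟩
  | A _ _ ihr ihs =>
    obtain ⟨x, hx⟩ := ihr
    obtain ⟨y, hy⟩ := ihs
    exact ⟨_, .app hx hy⟩

namespace Interp

variable {M : Model} {Γ : Env} {r : Term} {φ : Ty} {x : M.D}

lemma mem_den (h : Interp M Γ r φ x) (hF : Functional Γ) : x ∈ M.den Γ φ := by
  induction h with
  | atom ha => exact M.atomI_mem hF ha
  | const => exact M.constI_mem hF _ _
  | app _ _ ihr ihs => exact M.app_mem hF (ihr hF) (ihs hF)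
  | lam ha _ ih => exact M.abs_mem hF ha (ih (hF.insert ha))

lemma restrict (h : Interp M Γ r φ x) {Δ : Env} (hsub : Δ ⊆ Γ)
    (hcover : ∀ p ∈ Γ, p.1 ∈ r.fa → p ∈ Δ) : Interp M Δ r φ x := by
  induction h generalizing Δ with
  | atom ha => exact .atom (hcover _ ha (by simp [Term.fa]))
  | const => exact .const
  | app _ _ ihr ihs =>
    exact .app (ihr hsub fun p hp hr => hcover p hp (by simp [Term.fa, hr]))
      (ihs hsub fun p hp hs => hcover p hp (by simp [Term.fa, hs]))
  | @lam Γ a φ ψ r x ha _ ih =>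
    have haΔ : a ∉ domE Δ := fun h' =>
      ha (mem_domE.2 ((mem_domE.1 h').imp fun _ hm => hsub hm))
    refine .lam haΔ (ih (Finset.insert_subset_insert _ hsub) fun p hp hpr => ?_)
    rcases Finset.mem_insert.1 hp with rfl | hp
    · exact Finset.mem_insert_self _ _
    · have hpa : p.1 ≠ a := fun he => ha (mem_domE.2 ⟨p.2, he ▸ hp⟩)
      exact Finset.mem_insert_of_mem (hcover p hp (by simp [Term.fa, hpa, hpr]))

/-- Restricting `Γ` to the free atoms of `r` leaves `x` in the smaller denotation,
whose elements are supported by the smaller domain. -/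
lemma supportsAct_fa (h : Interp M Γ r φ x) (hF : Functional Γ) :
    SupportsAct M.act (↑r.fa) x := by
  set Δ := Γ.filter fun p => p.1 ∈ r.fa
  have hΔ : Functional Δ := hF.subset (Finset.filter_subset _ _)
  have hrestrict : Interp M Δ r φ x :=
    h.restrict (Finset.filter_subset _ _) fun p hp hpr => Finset.mem_filter.2 ⟨hp, hpr⟩
  exact (M.den_supp hΔ (hrestrict.mem_den hΔ)).mono (by exact_mod_cast domE_filter_subset Γ r.fa)

end Interp

/-- **First soundness theorem.** If `Γ ⊢ r : φ` then the interpretation `⟦r⟧_Γ`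
exists and is an element of `⟦φ⟧_Γ`; moreover `supp(⟦r⟧_Γ) ⊆ fa(r)`. -/
theorem first_soundness (M : Model) (Γ : Env) (r : Term) (φ : Ty)
    (h : Typing Γ r φ) :
    (∃ x, Interp M Γ r φ x) ∧
      ∀ x, Interp M Γ r φ x → x ∈ M.den Γ φ ∧ SupportsAct M.act (↑r.fa) x :=
  ⟨h.exists_interp M, fun _ hx => ⟨hx.mem_den h.functional, hx.supportsAct_fa h.functional⟩⟩
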